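/- arXiv:2501.18679 — 2 statements merged into one kernel-verified Lean document; each statement's English description precedes it below -/
import Mathlib

section
/- (Proposition 4: the Schmidt basis minimizes participation entropy over product bases.) Let M : Matrix ι κ ℂ with ι, κ finite, let hM : (M * Mᴴ).IsHermitian, and let λ := hM.eigenvalues : ι → ℝ be the eigenvalues of the positive semidefinite matrix M * Mᴴ (the squared Schmidt coefficients). Then for every real α > 1 one has ∑_{i,j} ‖M i j‖^(2α) ≤ ∑_i (λ i)^α, and for every real α with 0 < α < 1 one has ∑_{i,j} ‖M i j‖^(2α) ≥ ∑_i (λ i)^α. Consequently, for every α ∈ (0,1) ∪ (1,∞) the α-Rényi entropy (1/(1−α))·log of the coefficient distribution {‖M i j‖²} is at least the α-Rényi entropy of the Schmidt spectrum {λ i}. -/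
open Matrix Kronecker
open scoped Classical

noncomputable section

/-- Single-qubit Pauli matrices. -/
def pauli : Fin 4 → Matrix (Fin 2) (Fin 2) ℂ :=
  ![1, !![0, 1; 1, 0], !![0, -Complex.I; Complex.I, 0], !![1, 0; 0, -1]]

/-- Pauli string on `N` qubits with label `a`. -/
def PauliString {N : ℕ} (a : Fin N → Fin 4) :
    Matrix (Fin N → Fin 2) (Fin N → Fin 2) ℂ :=
  fun f g => ∏ k, pauli (a k) (f k) (g k)

/-- Reduced Choi state: partial trace over the doubled-B factor of the
normalized Choi state of `O`. -/
def rhoA {ιA ιB : Type*} [Fintype ιA] [Fintype ιB]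
    (O : Matrix (ιA × ιB) (ιA × ιB) ℂ) :
    Matrix (ιA × ιA) (ιA × ιA) ℂ :=
  fun p q =>
    (1 / (Fintype.card ιA * Fintype.card ιB : ℂ)) *
      ∑ b : ιB, ∑ b' : ιB, O (p.1, b) (p.2, b') * star (O (q.1, b) (q.2, b'))

/-- Identification of `N = N_A + N_B` qubits with the pair of subsystems. -/
def qubitEquiv (NA NB : ℕ) :
    (Fin (NA + NB) → Fin 2) ≃ (Fin NA → Fin 2) × (Fin NB → Fin 2) :=
  (Equiv.arrowCongr finSumFinEquiv.symm (Equiv.refl (Fin 2))).trans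
    (Equiv.sumArrowEquivProdArrow _ _ _)

/-- Reduced Choi state of an `N = N_A + N_B` qubit operator, subsystem A
being the first `N_A` qubits. -/
def rhoAq (NA NB : ℕ)
    (O : Matrix (Fin (NA + NB) → Fin 2) (Fin (NA + NB) → Fin 2) ℂ) :
    Matrix ((Fin NA → Fin 2) × (Fin NA → Fin 2))
      ((Fin NA → Fin 2) × (Fin NA → Fin 2)) ℂ :=
  rhoA (Matrix.reindex (qubitEquiv NA NB) (qubitEquiv NA NB) O)

/-- `n`-fold replica (tensor power) of a matrix. -/
def replica {ι : Type*} (n : ℕ) (O : Matrix ι ι ℂ) :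
    Matrix (Fin n → ι) (Fin n → ι) ℂ :=
  fun f g => ∏ a, O (f a) (g a)

/-- Replica permutation operator. -/
def Tperm {ι : Type*} [DecidableEq ι] {n : ℕ} (π : Equiv.Perm (Fin n)) :
    Matrix (Fin n → ι) (Fin n → ι) ℂ :=
  fun f g => if f = g ∘ π then 1 else 0

/-- Number of cycles of a permutation, counting fixed points as 1-cycles. -/
def numCycles {n : ℕ} (π : Equiv.Perm (Fin n)) : ℕ :=
  Multiset.card π.cycleType + (Finset.univ.filter fun x => π x = x).card

/-- `δ(π) = 0` if `π` has no fixed points and all cycles of even length,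
else `δ(π) = 1`. -/
def deltaOdd {n : ℕ} (π : Equiv.Perm (Fin n)) : ℕ :=
  if (∀ x, π x ≠ x) ∧ (∀ c ∈ π.cycleType, Even c) then 0 else 1

/-- Projector onto four-fold replicated Pauli strings. -/
def LambdaPlus (N : ℕ) :
    Matrix (Fin 4 → (Fin N → Fin 2)) (Fin 4 → (Fin N → Fin 2)) ℂ :=
  (1 / (4 ^ N : ℂ)) • ∑ a : Fin N → Fin 4, replica 4 (PauliString a)

def permA : Equiv.Perm (Fin 4) := Equiv.swap 0 1 * Equiv.swap 2 3
def permB : Equiv.Perm (Fin 4) := Equiv.swap 0 3 * Equiv.swap 1 2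

/-- The purity contraction permutation operator `T'` on four replicas of a
bipartite system. -/
def Tprime {ιA ιB : Type*} [DecidableEq ιA] [DecidableEq ιB] :
    Matrix (Fin 4 → ιA × ιB) (Fin 4 → ιA × ιB) ℂ :=
  fun f g =>
    if (∀ a, (f a).1 = (g (permA a)).1 ∧ (f a).2 = (g (permB a)).2) then 1 else 0

/-- The unitary stabilizer group of `U` (as a finite set of pairs of Pauli
labels). -/
def Stab {N : ℕ} (U : Matrix (Fin N → Fin 2) (Fin N → Fin 2) ℂ) :
    Finset ((Fin N → Fin 4) × (Fin N → Fin 4)) :=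
  Finset.univ.filter fun p =>
    Matrix.trace (PauliString p.1 * Uᴴ * PauliString p.2 * U) / (2 ^ N : ℂ)
      ∈ ({1, -1} : Set ℂ)

/-! Write `M Mᴴ = U diag(λ) Uᴴ`. The row weights `dᵢ = ∑ⱼ ‖Mᵢⱼ‖² = (M Mᴴ)ᵢᵢ = ∑ₖ ‖Uᵢₖ‖² λₖ`
are averages of the eigenvalues with the doubly stochastic weights `‖Uᵢₖ‖²`, so Jensen gives
`∑ᵢ f dᵢ ≤ ∑ₖ f λₖ` for every convex `f`. For `α ≥ 1` the map `x ↦ x ^ α` is convex and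
superadditive on `[0, ∞)`, whence `∑ᵢⱼ ‖Mᵢⱼ‖^(2α) ≤ ∑ᵢ dᵢ ^ α ≤ ∑ₖ λₖ ^ α`; for `α ≤ 1` both
inequalities reverse. Taking logarithms gives the Rényi entropy comparison, the degenerate case
being harmless because both power sums vanish exactly when `M = 0`. -/

open Finset
open scoped ComplexOrder

namespace Real

theorem sum_rpow_le_rpow_sum {ι : Type*} {s : Finset ι} {f : ι → ℝ} (hf : ∀ i ∈ s, 0 ≤ f i)
    {p : ℝ} (hp : 1 ≤ p) : ∑ i ∈ s, f i ^ p ≤ (∑ i ∈ s, f i) ^ p := by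
  induction s using cons_induction with
  | empty => simp [zero_rpow (by linarith : p ≠ 0)]
  | cons a s _ ih =>
    rw [forall_mem_cons] at hf
    rw [sum_cons, sum_cons]
    calc f a ^ p + ∑ i ∈ s, f i ^ p ≤ f a ^ p + (∑ i ∈ s, f i) ^ p := by gcongr; exact ih hf.2
      _ ≤ (f a + ∑ i ∈ s, f i) ^ p := add_rpow_le_rpow_add hf.1 (sum_nonneg hf.2) hp

theorem rpow_sum_le_sum_rpow {ι : Type*} {s : Finset ι} {f : ι → ℝ} (hf : ∀ i ∈ s, 0 ≤ f i)
    {p : ℝ} (hp₀ : 0 < p) (hp₁ : p ≤ 1) : (∑ i ∈ s, f i) ^ p ≤ ∑ i ∈ s, f i ^ p := by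
  induction s using cons_induction with
  | empty => simp [zero_rpow hp₀.ne']
  | cons a s _ ih =>
    rw [forall_mem_cons] at hf
    rw [sum_cons, sum_cons]
    calc (f a + ∑ i ∈ s, f i) ^ p ≤ f a ^ p + (∑ i ∈ s, f i) ^ p :=
          rpow_add_le_add_rpow hf.1 (sum_nonneg hf.2) hp₀.le hp₁
      _ ≤ f a ^ p + ∑ i ∈ s, f i ^ p := by gcongr; exact ih hf.2

theorem log_le_log_of_le_of_eq_zero {a b : ℝ} (hab : a ≤ b) (ha : 0 ≤ a) (h : a = 0 → b = 0) :
    log a ≤ log b := by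
  rcases ha.eq_or_lt with rfl | ha
  · simp [h rfl]
  · exact log_le_log ha hab

end Real

namespace Matrix

variable {𝕜 : Type*} [RCLike 𝕜] {m n : Type*} [Fintype n]

theorem mul_conjTranspose_self_apply_self (A : Matrix m n 𝕜) (i : m) :
    (A * Aᴴ) i i = ((∑ j, ‖A i j‖ ^ 2 : ℝ) : 𝕜) := by
  simp [mul_apply, RCLike.mul_conj]

theorem sum_norm_sq_row_of_mem_unitaryGroup [DecidableEq n] {U : Matrix n n 𝕜}
    (hU : U ∈ unitaryGroup n 𝕜) (i : n) : ∑ j, ‖U i j‖ ^ 2 = 1 := by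
  have h := mul_conjTranspose_self_apply_self U i
  rw [← star_eq_conjTranspose, Unitary.mul_star_self_of_mem hU, one_apply_eq] at h
  exact_mod_cast h.symm

theorem sum_norm_sq_col_of_mem_unitaryGroup [DecidableEq n] {U : Matrix n n 𝕜}
    (hU : U ∈ unitaryGroup n 𝕜) (j : n) : ∑ i, ‖U i j‖ ^ 2 = 1 := by
  simpa using sum_norm_sq_row_of_mem_unitaryGroup (Unitary.star_mem hU) j

namespace IsHermitian

variable [DecidableEq n] {A : Matrix n n 𝕜} (hA : A.IsHermitian)

theorem apply_self_eq_sum_eigenvalues (i : n) :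
    A i i = ((∑ k, ‖hA.eigenvectorUnitary i k‖ ^ 2 * hA.eigenvalues k : ℝ) : 𝕜) := by
  set U : Matrix n n 𝕜 := (hA.eigenvectorUnitary : Matrix n n 𝕜)
  conv_lhs => rw [hA.spectral_theorem]
  rw [Unitary.conjStarAlgAut_apply, mul_apply]
  push_cast
  refine sum_congr rfl fun k _ => ?_
  simp only [mul_diagonal, star_apply, Function.comp_apply, RCLike.star_def]
  rw [mul_comm (U i k), mul_assoc, RCLike.mul_conj, mul_comm]

theorem sum_map_diag_le_sum_map_eigenvalues {f : ℝ → ℝ} {s : Set ℝ} (hf : ConvexOn ℝ s f)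
    (hs : ∀ k, hA.eigenvalues k ∈ s) :
    ∑ i, f (RCLike.re (A i i)) ≤ ∑ k, f (hA.eigenvalues k) := by
  have hU := hA.eigenvectorUnitary.2
  calc ∑ i, f (RCLike.re (A i i))
      = ∑ i, f (∑ k, ‖hA.eigenvectorUnitary i k‖ ^ 2 • hA.eigenvalues k) := by
        simp [hA.apply_self_eq_sum_eigenvalues]
    _ ≤ ∑ i, ∑ k, ‖hA.eigenvectorUnitary i k‖ ^ 2 • f (hA.eigenvalues k) :=
        sum_le_sum fun i _ => hf.map_sum_le (fun k _ => sq_nonneg _)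
          (sum_norm_sq_row_of_mem_unitaryGroup hU i) fun k _ => hs k
    _ = ∑ k, f (hA.eigenvalues k) := by
        rw [sum_comm]
        exact sum_congr rfl fun k _ => by
          rw [← sum_smul, sum_norm_sq_col_of_mem_unitaryGroup hU, one_smul]

theorem sum_map_eigenvalues_le_sum_map_diag {f : ℝ → ℝ} {s : Set ℝ} (hf : ConcaveOn ℝ s f)
    (hs : ∀ k, hA.eigenvalues k ∈ s) :
    ∑ k, f (hA.eigenvalues k) ≤ ∑ i, f (RCLike.re (A i i)) := by
  simpa using hA.sum_map_diag_le_sum_map_eigenvalues hf.neg hs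

end IsHermitian

variable {ι κ : Type*} [Fintype ι] [Fintype κ]

theorem sum_sum_norm_rpow_eq_zero_iff (M : Matrix ι κ 𝕜) {β : ℝ} (hβ : β ≠ 0) :
    ∑ i, ∑ j, ‖M i j‖ ^ β = 0 ↔ M = 0 := by
  have hnonneg (i : ι) (j : κ) : 0 ≤ ‖M i j‖ ^ β := Real.rpow_nonneg (norm_nonneg _) β
  simp only [sum_eq_zero_iff_of_nonneg fun i _ => sum_nonneg fun j _ => hnonneg i j,
    sum_eq_zero_iff_of_nonneg fun j _ => hnonneg _ j, mem_univ, true_implies,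
    Real.rpow_eq_zero (norm_nonneg _) hβ, norm_eq_zero]
  exact Matrix.ext_iff (N := 0)

variable [DecidableEq ι]

theorem sum_sum_norm_rpow_le_sum_eigenvalues_rpow (M : Matrix ι κ 𝕜)
    (hM : (M * Mᴴ).IsHermitian) {α : ℝ} (hα : 1 ≤ α) :
    ∑ i, ∑ j, ‖M i j‖ ^ (2 * α) ≤ ∑ i, hM.eigenvalues i ^ α := by
  calc ∑ i, ∑ j, ‖M i j‖ ^ (2 * α) = ∑ i, ∑ j, (‖M i j‖ ^ 2) ^ α := by
        simp_rw [← Real.rpow_natCast_mul (norm_nonneg _), Nat.cast_ofNat]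
    _ ≤ ∑ i, (∑ j, ‖M i j‖ ^ 2) ^ α :=
        sum_le_sum fun i _ => Real.sum_rpow_le_rpow_sum (fun j _ => sq_nonneg _) hα
    _ = ∑ i, (RCLike.re ((M * Mᴴ) i i)) ^ α := by
        simp [mul_conjTranspose_self_apply_self]
    _ ≤ ∑ i, hM.eigenvalues i ^ α :=
        hM.sum_map_diag_le_sum_map_eigenvalues (convexOn_rpow hα)
          (eigenvalues_self_mul_conjTranspose_nonneg M)

theorem sum_eigenvalues_rpow_le_sum_sum_norm_rpow (M : Matrix ι κ 𝕜)
    (hM : (M * Mᴴ).IsHermitian) {α : ℝ} (hα₀ : 0 < α) (hα₁ : α ≤ 1) :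
    ∑ i, hM.eigenvalues i ^ α ≤ ∑ i, ∑ j, ‖M i j‖ ^ (2 * α) := by
  calc ∑ i, hM.eigenvalues i ^ α ≤ ∑ i, (RCLike.re ((M * Mᴴ) i i)) ^ α :=
        hM.sum_map_eigenvalues_le_sum_map_diag (Real.concaveOn_rpow hα₀.le hα₁)
          (eigenvalues_self_mul_conjTranspose_nonneg M)
    _ = ∑ i, (∑ j, ‖M i j‖ ^ 2) ^ α := by
        simp [mul_conjTranspose_self_apply_self]
    _ ≤ ∑ i, ∑ j, (‖M i j‖ ^ 2) ^ α :=
        sum_le_sum fun i _ => Real.rpow_sum_le_sum_rpow (fun j _ => sq_nonneg _) hα₀ hα₁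
    _ = ∑ i, ∑ j, ‖M i j‖ ^ (2 * α) := by
        simp_rw [← Real.rpow_natCast_mul (norm_nonneg _), Nat.cast_ofNat]

theorem sum_eigenvalues_rpow_eq_zero_iff (M : Matrix ι κ 𝕜) (hM : (M * Mᴴ).IsHermitian)
    {α : ℝ} (hα : α ≠ 0) : ∑ i, hM.eigenvalues i ^ α = 0 ↔ M = 0 := by
  have hev := eigenvalues_self_mul_conjTranspose_nonneg M
  rw [sum_eq_zero_iff_of_nonneg fun i _ => Real.rpow_nonneg (hev i) α,
    ← self_mul_conjTranspose_eq_zero, ← hM.eigenvalues_eq_zero_iff, funext_iff]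
  simp [Real.rpow_eq_zero (hev _) hα]

end Matrix

/-- Proposition 4: the Schmidt basis minimizes participation
entropy over product bases. -/
theorem schmidt_minimizes_participation_entropy {ι κ : Type*}
    [Fintype ι] [Fintype κ] [DecidableEq ι]
    (M : Matrix ι κ ℂ) (hM : (M * Mᴴ).IsHermitian) :
    (∀ α : ℝ, 1 < α →
      ∑ i : ι, ∑ j : κ, ‖M i j‖ ^ (2 * α) ≤ ∑ i : ι, hM.eigenvalues i ^ α) ∧
    (∀ α : ℝ, 0 < α → α < 1 →
      ∑ i : ι, hM.eigenvalues i ^ α ≤ ∑ i : ι, ∑ j : κ, ‖M i j‖ ^ (2 * α)) ∧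
    (∀ α : ℝ, 0 < α → α ≠ 1 →
      (1 / (1 - α)) * Real.log (∑ i : ι, hM.eigenvalues i ^ α) ≤
        (1 / (1 - α)) * Real.log (∑ i : ι, ∑ j : κ, ‖M i j‖ ^ (2 * α))) := by
  refine ⟨fun α hα => M.sum_sum_norm_rpow_le_sum_eigenvalues_rpow hM hα.le,
    fun α hα₀ hα₁ => M.sum_eigenvalues_rpow_le_sum_sum_norm_rpow hM hα₀ hα₁.le,
    fun α hα₀ hα₁ => ?_⟩
  have h_eq_zero : ∑ i, hM.eigenvalues i ^ α = 0 ↔ ∑ i, ∑ j, ‖M i j‖ ^ (2 * α) = 0 :=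
    (M.sum_eigenvalues_rpow_eq_zero_iff hM hα₀.ne').trans
      (M.sum_sum_norm_rpow_eq_zero_iff (by positivity)).symm
  rcases hα₁.lt_or_gt with hlt | hgt
  · refine mul_le_mul_of_nonneg_left ?_ (by rw [one_div_nonneg]; linarith)
    refine Real.log_le_log_of_le_of_eq_zero
      (M.sum_eigenvalues_rpow_le_sum_sum_norm_rpow hM hα₀ hlt.le) ?_ h_eq_zero.1
    exact sum_nonneg fun i _ => Real.rpow_nonneg (eigenvalues_self_mul_conjTranspose_nonneg M i) α
  · refine mul_le_mul_of_nonpos_left ?_ (by rw [one_div_nonpos]; linarith)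
    exact Real.log_le_log_of_le_of_eq_zero
      (M.sum_sum_norm_rpow_le_sum_eigenvalues_rpow hM hgt.le) (by positivity) h_eq_zero.2

end
end

section
/- (Λ⁺ is a projector.) For every N : ℕ, the matrix Λ⁺ on (Fin 4 → (Fin N → Fin 2)) satisfies Λ⁺ * Λ⁺ = Λ⁺. -/
/-!
Pauli strings multiply as `P_a P_b = ω • P_{a xor b}` with a phase `ω` that is a fourth root
of unity, so in the fourfold replica the phase disappears:
`P_a^{⊗4} P_b^{⊗4} = P_{a xor b}^{⊗4}`.
Since `b ↦ a xor b` permutes the labels, `(∑_a P_a^{⊗4})² = 4^N ∑_c P_c^{⊗4}`, and the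
normalisation `1/4^N = 1/D²` makes `Λ⁺` idempotent.
-/

open Matrix Kronecker
open scoped Classical

noncomputable section

/- Pauli matrices multiply as `σᵢ σⱼ = pauliPhase i j • σ_{i xor j}`: with the labelling
`0 = 1, 1 = X, 2 = Y, 3 = Z`, the label of a product is the bitwise xor, e.g. `XY = iZ`. -/
def pauliPhase : Fin 4 → Fin 4 → ℂ :=
  ![![1, 1, 1, 1], ![1, 1, Complex.I, -Complex.I], ![1, -Complex.I, 1, Complex.I],
    ![1, Complex.I, -Complex.I, 1]]

lemma pauli_mul (i j : Fin 4) : pauli i * pauli j = pauliPhase i j • pauli (i ^^^ j) := by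
  ext x y
  fin_cases i <;> fin_cases j <;> fin_cases x <;> fin_cases y <;>
    simp [pauli, pauliPhase, Matrix.mul_apply, Fin.sum_univ_two, Matrix.one_apply]

lemma pauliPhase_pow_four (i j : Fin 4) : pauliPhase i j ^ 4 = 1 := by
  fin_cases i <;> fin_cases j <;> simp [pauliPhase] <;> norm_num [pow_succ, Complex.I_mul_I]

lemma xor_involutive (i : Fin 4) : Function.Involutive (i ^^^ ·) := by
  intro j; fin_cases i <;> fin_cases j <;> rfl

lemma sum_prod_mul_prod_eq_prod_mul_apply {κ ι : Type*} [Fintype κ] [DecidableEq κ]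
    [Fintype ι] (A B : κ → Matrix ι ι ℂ) (f g : κ → ι) :
    ∑ x : κ → ι, (∏ k, A k (f k) (x k)) * ∏ k, B k (x k) (g k)
      = ∏ k, (A k * B k) (f k) (g k) := by
  simp only [Matrix.mul_apply, Finset.prod_univ_sum, Fintype.piFinset_univ,
    Finset.prod_mul_distrib]

lemma replica_mul {ι : Type*} [Fintype ι] (n : ℕ) (O O' : Matrix ι ι ℂ) :
    replica n O * replica n O' = replica n (O * O') := by
  ext f g
  exact sum_prod_mul_prod_eq_prod_mul_apply (fun _ => O) (fun _ => O') f g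

lemma replica_smul {ι : Type*} (n : ℕ) (z : ℂ) (O : Matrix ι ι ℂ) :
    replica n (z • O) = z ^ n • replica n O := by
  ext f g
  simp [replica, Finset.prod_mul_distrib]

lemma PauliString_mul {N : ℕ} (a b : Fin N → Fin 4) :
    PauliString a * PauliString b
      = (∏ k, pauliPhase (a k) (b k)) • PauliString (fun k => a k ^^^ b k) := by
  ext f g
  rw [Matrix.mul_apply, Matrix.smul_apply, smul_eq_mul]
  refine (sum_prod_mul_prod_eq_prod_mul_apply (fun k => pauli (a k)) (fun k => pauli (b k))
    f g).trans ?_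
  simp [pauli_mul, PauliString, Finset.prod_mul_distrib]

lemma replica_PauliString_mul {N n : ℕ} (hn : 4 ∣ n) (a b : Fin N → Fin 4) :
    replica n (PauliString a) * replica n (PauliString b)
      = replica n (PauliString (fun k => a k ^^^ b k)) := by
  obtain ⟨m, rfl⟩ := hn
  rw [replica_mul, PauliString_mul, replica_smul, pow_mul, ← Finset.prod_pow]
  simp [pauliPhase_pow_four]

lemma sum_replica_PauliString_mul_self {N n : ℕ} (hn : 4 ∣ n) :
    (∑ a : Fin N → Fin 4, replica n (PauliString a)) *
      (∑ b : Fin N → Fin 4, replica n (PauliString b))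
      = (4 ^ N : ℂ) • ∑ c : Fin N → Fin 4, replica n (PauliString c) := by
  have translate (a : Fin N → Fin 4) :
      ∑ b : Fin N → Fin 4, replica n (PauliString (fun k => a k ^^^ b k))
        = ∑ c : Fin N → Fin 4, replica n (PauliString c) :=
    Equiv.sum_comp
      (Function.Involutive.toPerm _ fun b => funext fun k => xor_involutive (a k) (b k))
      (fun c => replica n (PauliString c))
  rw [Finset.sum_mul_sum]
  simp only [replica_PauliString_mul hn, translate, Finset.sum_const, Finset.card_univ,
    Fintype.card_fun, Fintype.card_fin]
  simp [← Nat.cast_smul_eq_nsmul ℂ]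

/-- `Λ⁺` is a projector. -/
theorem lambdaPlus_projector (N : ℕ) :
    LambdaPlus N * LambdaPlus N = LambdaPlus N := by
  have h4 : (4 : ℂ) ^ N ≠ 0 := pow_ne_zero _ (by norm_num)
  rw [LambdaPlus, Matrix.smul_mul, Matrix.mul_smul, smul_smul,
    sum_replica_PauliString_mul_self (dvd_refl 4), smul_smul]
  congr 1
  field_simp

end
end
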